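/- arXiv:1806.07756 — 6 statements merged into one kernel-verified Lean document; each statement's English description precedes it below -/
import Mathlib

section
/- Let N, M ≥ 1, let Ω ⊆ ℂ^N be a connected open set, and let f = (f_1,…,f_M) : Ω → ℂ^M be real analytic. Suppose that for all indices r, s ∈ {1,…,M}, all j, k ∈ {1,…,N}, and every z ∈ Ω one has (∂f_r/∂z_j)(z) · (∂f_s/∂z̄_k)(z) = 0. Then f is holomorphic on Ω or the componentwise complex conjugate z ↦ conj(f(z)) is holomorphic on Ω. (Dichotomy step in the proof of Theorem A.) -/
/-!
The Wirtinger derivatives of a real analytic map are real analytic, and on a connected open set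
the real analytic functions form an integral domain. Hence either every `∂f_s/∂z̄_k` vanishes
identically, or one of them is nonzero somewhere and then every `∂f_r/∂z_j` vanishes identically.
In the first case `f` satisfies the Cauchy–Riemann equations; in the second `conj ∘ f` does,
since `∂(conj g)/∂z̄_k = conj (∂g/∂z_k)`.
-/

/-- The Wirtinger derivative `∂g/∂z_j` of a function `g : ℂ^n → ℂ`, defined from the
real Fréchet derivative. -/
noncomputable def wirtingerDz {n : ℕ} (g : (Fin n → ℂ) → ℂ) (z : Fin n → ℂ) (j : Fin n) : ℂ :=
  (1 / 2) * (fderiv ℝ g z (Pi.single j 1) - Complex.I * fderiv ℝ g z (Pi.single j Complex.I))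

/-- The Wirtinger derivative `∂g/∂z̄_j` of a function `g : ℂ^n → ℂ`, defined from the
real Fréchet derivative. -/
noncomputable def wirtingerDzbar {n : ℕ} (g : (Fin n → ℂ) → ℂ) (z : Fin n → ℂ) (j : Fin n) : ℂ :=
  (1 / 2) * (fderiv ℝ g z (Pi.single j 1) + Complex.I * fderiv ℝ g z (Pi.single j Complex.I))

open Complex ComplexConjugate

namespace AnalyticOnNhd

variable {𝕜 : Type*} [NontriviallyNormedField 𝕜] {E : Type*} [NormedAddCommGroup E]
  [NormedSpace 𝕜 E] {A : Type*} [NormedRing A] [NoZeroDivisors A] [NormedAlgebra 𝕜 A]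
  {U : Set E}

theorem eq_zero_or_eq_zero_of_mul_eq_zero_of_isOpen {f g : E → A} (hf : AnalyticOnNhd 𝕜 f U)
    (hg : AnalyticOnNhd 𝕜 g U) (hUo : IsOpen U) (hU : IsPreconnected U)
    (hfg : ∀ z ∈ U, f z * g z = 0) :
    (∀ z ∈ U, f z = 0) ∨ (∀ z ∈ U, g z = 0) := by
  by_cases hg0 : ∀ z ∈ U, g z = 0
  · exact Or.inr hg0
  push Not at hg0
  obtain ⟨z₀, hz₀, hgz₀⟩ := hg0
  refine Or.inl fun z hz => hf.eqOn_zero_of_preconnected_of_eventuallyEq_zero hU hz₀ ?_ hz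
  filter_upwards [hUo.mem_nhds hz₀, (hg z₀ hz₀).continuousAt.eventually_ne hgz₀] with w hwU hgw
  exact (mul_eq_zero.mp (hfg w hwU)).resolve_right hgw

theorem forall_eq_zero_or_forall_eq_zero_of_mul_eq_zero {α β : Type*} {F : α → E → A}
    {G : β → E → A} (hF : ∀ a, AnalyticOnNhd 𝕜 (F a) U) (hG : ∀ b, AnalyticOnNhd 𝕜 (G b) U)
    (hUo : IsOpen U) (hU : IsPreconnected U) (hFG : ∀ a b, ∀ z ∈ U, F a z * G b z = 0) :
    (∀ a, ∀ z ∈ U, F a z = 0) ∨ (∀ b, ∀ z ∈ U, G b z = 0) := by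
  by_cases hG0 : ∀ b, ∀ z ∈ U, G b z = 0
  · exact Or.inr hG0
  push Not at hG0
  obtain ⟨b, z₀, hz₀, hne⟩ := hG0
  exact Or.inl fun a => ((hF a).eq_zero_or_eq_zero_of_mul_eq_zero_of_isOpen (hG b) hUo hU
    (fun z hz => hFG a b z hz)).resolve_right fun hb => hne (hb z₀ hz₀)

theorem fderiv_apply {F : Type*} [NormedAddCommGroup F] [NormedSpace 𝕜 F] [CompleteSpace F]
    {g : E → F} (hg : AnalyticOnNhd 𝕜 g U) (v : E) :
    AnalyticOnNhd 𝕜 (fun z => fderiv 𝕜 g z v) U :=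
  (ContinuousLinearMap.apply 𝕜 F v).comp_analyticOnNhd hg.fderiv

end AnalyticOnNhd

theorem ContinuousLinearMap.exists_restrictScalars_eq_of_map_single_I {ι : Type*} [Fintype ι]
    [DecidableEq ι] {F : Type*} [NormedAddCommGroup F] [NormedSpace ℂ F]
    (L : (ι → ℂ) →L[ℝ] F) (h : ∀ k, L (Pi.single k I) = I • L (Pi.single k 1)) :
    ∃ L' : (ι → ℂ) →L[ℂ] F, L'.restrictScalars ℝ = L := by
  have hsingle : ∀ k (c : ℂ), L (Pi.single k c) = c • L (Pi.single k 1) := by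
    intro k c
    have hc : Pi.single k c =
        c.re • (Pi.single k 1 : ι → ℂ) + c.im • (Pi.single k I : ι → ℂ) := by
      rw [← Pi.single_smul, ← Pi.single_smul, ← Pi.single_add]
      simp [real_smul]
    rw [hc, map_add, L.map_smul, L.map_smul, h k, ← Complex.coe_smul, ← Complex.coe_smul,
      smul_smul, ← add_smul, re_add_im]
  have hsum : ∀ v, L v = ∑ k, v k • L (Pi.single k 1) := fun v => by
    conv_lhs => rw [← Finset.univ_sum_single v]
    rw [map_sum]
    exact Finset.sum_congr rfl fun k _ => hsingle k (v k)
  have hsmul : ∀ (c : ℂ) v, L (c • v) = c • L v := fun c v => by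
    rw [hsum (c • v), hsum v, Finset.smul_sum]
    exact Finset.sum_congr rfl fun k _ => by rw [Pi.smul_apply, smul_eq_mul, mul_smul]
  exact ⟨⟨⟨⟨L, L.map_add⟩, hsmul⟩, L.cont⟩, rfl⟩

section Wirtinger

variable {n : ℕ}

theorem wirtingerDzbar_eq_zero_iff {g : (Fin n → ℂ) → ℂ} {z : Fin n → ℂ} {k : Fin n} :
    wirtingerDzbar g z k = 0 ↔
      fderiv ℝ g z (Pi.single k I) = I * fderiv ℝ g z (Pi.single k 1) := by
  unfold wirtingerDzbar
  constructor <;> intro h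
  · linear_combination (-2 * I) * h + fderiv ℝ g z (Pi.single k I) * I_sq
  · linear_combination (I / 2) * h + (fderiv ℝ g z (Pi.single k 1) / 2) * I_sq

theorem wirtingerDzbar_conj (g : (Fin n → ℂ) → ℂ) (z : Fin n → ℂ) (k : Fin n) :
    wirtingerDzbar (fun w => conj (g w)) z k = conj (wirtingerDz g z k) := by
  have hfd : fderiv ℝ (fun w => conj (g w)) z = (conjCLE : ℂ →L[ℝ] ℂ).comp (fderiv ℝ g z) :=
    conjCLE.comp_fderiv
  simp only [wirtingerDzbar, wirtingerDz, hfd, ContinuousLinearMap.comp_apply,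
    ContinuousLinearEquiv.coe_coe, conjCLE_apply, map_mul, map_sub, map_div₀, map_one,
    map_ofNat, conj_I]
  ring

theorem AnalyticOnNhd.wirtingerDz {g : (Fin n → ℂ) → ℂ} {s : Set (Fin n → ℂ)}
    (hg : AnalyticOnNhd ℝ g s) (j : Fin n) :
    AnalyticOnNhd ℝ (fun z => wirtingerDz g z j) s :=
  analyticOnNhd_const.mul ((hg.fderiv_apply _).sub (analyticOnNhd_const.mul (hg.fderiv_apply _)))

theorem AnalyticOnNhd.wirtingerDzbar {g : (Fin n → ℂ) → ℂ} {s : Set (Fin n → ℂ)}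
    (hg : AnalyticOnNhd ℝ g s) (j : Fin n) :
    AnalyticOnNhd ℝ (fun z => wirtingerDzbar g z j) s :=
  analyticOnNhd_const.mul ((hg.fderiv_apply _).add (analyticOnNhd_const.mul (hg.fderiv_apply _)))

theorem DifferentiableAt.complex_of_wirtingerDzbar_eq_zero {g : (Fin n → ℂ) → ℂ}
    {z : Fin n → ℂ} (hg : DifferentiableAt ℝ g z) (h : ∀ k, wirtingerDzbar g z k = 0) :
    DifferentiableAt ℂ g z := by
  obtain ⟨L', hL'⟩ := (fderiv ℝ g z).exists_restrictScalars_eq_of_map_single_I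
    fun k => wirtingerDzbar_eq_zero_iff.mp (h k)
  exact (hasFDerivAt_of_restrictScalars ℝ hg.hasFDerivAt hL').differentiableAt

theorem DifferentiableOn.complex_of_wirtingerDzbar_eq_zero {ι : Type*} [Fintype ι]
    {f : (Fin n → ℂ) → ι → ℂ} {Ω : Set (Fin n → ℂ)} (hΩ : IsOpen Ω)
    (hf : DifferentiableOn ℝ f Ω) (h : ∀ s k, ∀ z ∈ Ω, wirtingerDzbar (fun w => f w s) z k = 0) :
    DifferentiableOn ℂ f Ω :=
  differentiableOn_pi.mpr fun s z hz =>
    have hs := (differentiableOn_pi.mp hf s).differentiableAt (hΩ.mem_nhds hz)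
    (hs.complex_of_wirtingerDzbar_eq_zero fun k => h s k z hz).differentiableWithinAt

end Wirtinger

theorem holomorphic_dichotomy_general (N M : ℕ)
    (Ω : Set (Fin N → ℂ)) (hΩ : IsOpen Ω) (hc : IsConnected Ω)
    (f : (Fin N → ℂ) → (Fin M → ℂ)) (hf : AnalyticOnNhd ℝ f Ω)
    (hprod : ∀ (r s : Fin M) (j k : Fin N), ∀ z ∈ Ω,
      wirtingerDz (fun w => f w r) z j * wirtingerDzbar (fun w => f w s) z k = 0) :
    DifferentiableOn ℂ f Ω ∨
      DifferentiableOn ℂ (fun z i => (starRingEnd ℂ) (f z i)) Ω := by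
  have hfc : ∀ r, AnalyticOnNhd ℝ (fun w => f w r) Ω := analyticOnNhd_pi_iff.mp hf
  rcases AnalyticOnNhd.forall_eq_zero_or_forall_eq_zero_of_mul_eq_zero
      (fun a : Fin M × Fin N => (hfc a.1).wirtingerDz a.2)
      (fun b : Fin M × Fin N => (hfc b.1).wirtingerDzbar b.2) hΩ hc.isPreconnected
      (fun a b => hprod a.1 b.1 a.2 b.2) with hdz | hdzbar
  · refine Or.inr (DifferentiableOn.complex_of_wirtingerDzbar_eq_zero hΩ ?_ fun s k z hz => ?_)
    · exact differentiableOn_pi.mpr fun i =>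
        conjCLE.differentiable.comp_differentiableOn (differentiableOn_pi.mp hf.differentiableOn i)
    · rw [wirtingerDzbar_conj, hdz (s, k) z hz, map_zero]
  · exact Or.inl (DifferentiableOn.complex_of_wirtingerDzbar_eq_zero hΩ hf.differentiableOn
      fun s k => hdzbar (s, k))

/-- Dichotomy step in the proof of Theorem A: if `f : Ω → ℂ^M` is real analytic on a
connected open set `Ω ⊆ ℂ^N` and `(∂f_r/∂z_j)·(∂f_s/∂z̄_k) ≡ 0` for all indices, then
`f` is holomorphic or its componentwise conjugate is holomorphic. -/
theorem holomorphic_dichotomy (N M : ℕ) (hN : 1 ≤ N) (hM : 1 ≤ M)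
    (Ω : Set (Fin N → ℂ)) (hΩ : IsOpen Ω) (hc : IsConnected Ω)
    (f : (Fin N → ℂ) → (Fin M → ℂ)) (hf : AnalyticOnNhd ℝ f Ω)
    (hprod : ∀ (r s : Fin M) (j k : Fin N), ∀ z ∈ Ω,
      wirtingerDz (fun w => f w r) z j * wirtingerDzbar (fun w => f w s) z k = 0) :
    DifferentiableOn ℂ f Ω ∨
      DifferentiableOn ℂ (fun z i => (starRingEnd ℂ) (f z i)) Ω :=
  holomorphic_dichotomy_general N M Ω hΩ hc f hf hprod
end

section
/- Let 1 ≤ k ≤ N and let x ∈ ℝ. The vector (1,…,1,x) ∈ ℝ^N (with N−1 coordinates equal to 1 and one coordinate equal to x) belongs to Λ_{k,N} if and only if x ≥ 1 − N/k. In particular, (1,…,1,1 − N/k) ∈ Λ_{k,N}. (Proposition 3.6(4).) -/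
/-- The `l`-th elementary symmetric polynomial of `x ∈ ℝ^N`. -/
def esymm {N : ℕ} (l : ℕ) (x : Fin N → ℝ) : ℝ :=
  ∑ s ∈ Finset.powersetCard l (Finset.univ : Finset (Fin N)), ∏ j ∈ s, x j

/-- The cone `Λ_{k,N} = {x ∈ ℝ^N : σ_l(x) ≥ 0, l = 1,…,k}`. -/
def Lambda (k N : ℕ) : Set (Fin N → ℝ) :=
  {x | ∀ l, 1 ≤ l → l ≤ k → 0 ≤ esymm l x}

/-!
Removing the special coordinate `i` splits `σ_{m+1}(1,…,1,x)` into the subsets avoiding `i`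
and those containing it, so `σ_{m+1}(1,…,1,x) = C(n,m+1) + x C(n,m)`. Since
`(m+1) C(n,m+1) = (n-m) C(n,m)`, this is `C(n,m) (x - (1 - (n+1)/(m+1)))`, which is
nonnegative exactly when `x ≥ 1 - (n+1)/l` for `l = m+1`, and these thresholds increase with `l`.
-/

open Finset

theorem Finset.sum_prod_powersetCard_succ_insert {α R : Type*} [DecidableEq α] [CommSemiring R]
    (f : α → R) {a : α} {s : Finset α} (ha : a ∉ s) (m : ℕ) :
    ∑ t ∈ powersetCard (m + 1) (insert a s), ∏ j ∈ t, f j =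
      ∑ t ∈ powersetCard (m + 1) s, ∏ j ∈ t, f j +
        f a * ∑ t ∈ powersetCard m s, ∏ j ∈ t, f j := by
  have notMem_of_mem {t : Finset α} (ht : t ∈ powersetCard m s) : a ∉ t :=
    fun h => ha ((mem_powersetCard.1 ht).1 h)
  rw [powersetCard_succ_insert ha, sum_union, sum_image, mul_sum]
  · exact congrArg _ (sum_congr rfl fun t ht => prod_insert (notMem_of_mem ht))
  · intro t ht u hu htu
    rw [← erase_insert (notMem_of_mem ht), htu, erase_insert (notMem_of_mem hu)]
  · refine disjoint_left.2 fun t ht ht' => ?_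
    obtain ⟨u, -, rfl⟩ := mem_image.1 ht'
    exact ha ((mem_powersetCard.1 ht).1 (mem_insert_self a u))

theorem esymm_ite_ones (n m : ℕ) (i : Fin (n + 1)) (x : ℝ) :
    esymm (m + 1) (fun j : Fin (n + 1) => if j = i then x else 1) =
      n.choose (m + 1) + x * n.choose m := by
  have sum_ones (l : ℕ) : ∑ t ∈ powersetCard l (univ.erase i),
      ∏ j ∈ t, (if j = i then x else 1) = n.choose l := by
    rw [sum_congr rfl fun t ht => prod_eq_one fun j hj =>
      if_neg (ne_of_mem_erase ((mem_powersetCard.1 ht).1 hj))]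
    simp [card_powersetCard, card_erase_of_mem]
  rw [esymm, ← insert_erase (mem_univ i),
    sum_prod_powersetCard_succ_insert _ (notMem_erase i _), sum_ones, sum_ones, if_pos rfl]

theorem choose_add_mul_choose_nonneg_iff {n m : ℕ} (hm : m ≤ n) (x : ℝ) :
    0 ≤ (n.choose (m + 1) : ℝ) + x * n.choose m ↔ 1 - ((n : ℝ) + 1) / (m + 1) ≤ x := by
  have hchoose : (n.choose (m + 1) : ℝ) = n.choose m * (((n : ℝ) + 1) / (m + 1) - 1) := by
    have h := Nat.choose_succ_right_eq n m
    rw [← Nat.cast_inj (R := ℝ)] at h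
    push_cast [hm] at h
    field_simp
    linarith
  have hpos : (0 : ℝ) < n.choose m := by exact_mod_cast Nat.choose_pos hm
  have hfactor : (n.choose (m + 1) : ℝ) + x * n.choose m =
      n.choose m * (x - (1 - ((n : ℝ) + 1) / (m + 1))) := by
    rw [hchoose]; ring
  rw [hfactor, mul_nonneg_iff_of_pos_left hpos, sub_nonneg]

theorem esymm_ite_ones_nonneg_iff {n l : ℕ} (hl : 1 ≤ l) (hln : l ≤ n + 1)
    (i : Fin (n + 1)) (x : ℝ) :
    0 ≤ esymm l (fun j : Fin (n + 1) => if j = i then x else 1) ↔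
      1 - ((n : ℝ) + 1) / l ≤ x := by
  obtain ⟨m, rfl⟩ := Nat.exists_eq_add_of_le' hl
  rw [esymm_ite_ones, choose_add_mul_choose_nonneg_iff (by omega)]
  push_cast
  rfl

/-- Proposition 3.6(4): with `N = n + 1`, the vector `(1,…,1,x)` belongs to `Λ_{k,N}`
if and only if `x ≥ 1 − N/k`; in particular `(1,…,1,1 − N/k) ∈ Λ_{k,N}`. -/
theorem Lambda_ones_and_x (n k : ℕ) (hk : 1 ≤ k) (hkN : k ≤ n + 1) :
    (∀ x : ℝ,
      (fun i : Fin (n + 1) => if i = Fin.last n then x else 1) ∈ Lambda k (n + 1) ↔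
        1 - ((n : ℝ) + 1) / k ≤ x) ∧
    (fun i : Fin (n + 1) => if i = Fin.last n then 1 - ((n : ℝ) + 1) / k else 1)
      ∈ Lambda k (n + 1) := by
  have mem_iff (x : ℝ) :
      (fun i : Fin (n + 1) => if i = Fin.last n then x else 1) ∈ Lambda k (n + 1) ↔
        1 - ((n : ℝ) + 1) / k ≤ x := by
    refine ⟨fun h => (esymm_ite_ones_nonneg_iff hk hkN _ x).1 (h k hk le_rfl),
      fun h l hl hlk => (esymm_ite_ones_nonneg_iff hl (hlk.trans hkN) _ x).2 ?_⟩
    have hl' : (0 : ℝ) < l := by exact_mod_cast hl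
    calc 1 - ((n : ℝ) + 1) / l ≤ 1 - ((n : ℝ) + 1) / k := by gcongr
      _ ≤ x := h
  exact ⟨mem_iff, (mem_iff _).2 le_rfl⟩
end

section
/- Let K, L, k, l be integers with 1 ≤ k ≤ l ≤ L < K, and let y = (y_1,…,y_L) ∈ ℝ^L have all coordinates nonnegative. If for every x = (x_1,…,x_K) ∈ Λ_{k,K} the Hadamard product of y with the truncation of x to its first L coordinates, namely (y_1x_1,…,y_Lx_L), belongs to Λ_{l,L}, then y_1 = ⋯ = y_L = 0. (Lemma 3.7(1).) -/
open Finset Filter Topology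

lemma card_filter_notMem_powersetCard {α : Type*} [DecidableEq α] {B : Finset α} {a : α}
    (ha : a ∈ B) (m : ℕ) : #{s ∈ B.powersetCard m | a ∉ s} = (#B - 1).choose m := by
  rw [← card_erase_of_mem ha, ← card_powersetCard]
  congr 1
  ext s
  simp only [mem_filter, mem_powersetCard, subset_erase]
  tauto

lemma prod_update_indicator {α : Type*} [DecidableEq α] {B s : Finset α} (hsB : s ⊆ B)
    (i₀ : α) (v : ℝ) :
    ∏ j ∈ s, Function.update ((B : Set α).indicator 1) i₀ v j = if i₀ ∈ s then v else 1 := by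
  have hone : ∀ j ∈ s, j ≠ i₀ → Function.update ((B : Set α).indicator 1) i₀ v j = 1 :=
    fun j hj hji => by
      rw [Function.update_of_ne hji, Set.indicator_of_mem (mem_coe.2 (hsB hj)), Pi.one_apply]
  split_ifs with h
  · rw [← mul_prod_erase s _ h, Function.update_self,
      prod_eq_one fun j hj => hone j (mem_of_mem_erase hj) (ne_of_mem_erase hj), mul_one]
  · exact prod_eq_one fun j hj => hone j hj (ne_of_mem_of_not_mem hj h)

section esymm

variable {N m : ℕ}

lemma esymm_eq_sum_powersetCard_of_eq_zero {x : Fin N → ℝ} {B : Finset (Fin N)}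
    (hx : ∀ j ∉ B, x j = 0) :
    esymm m x = ∑ s ∈ B.powersetCard m, ∏ j ∈ s, x j := by
  refine (sum_subset (powersetCard_mono (subset_univ B)) fun s hs hsB => ?_).symm
  obtain ⟨j, hjs, hjB⟩ :=
    not_subset.mp fun h => hsB (mem_powersetCard.2 ⟨h, (mem_powersetCard.1 hs).2⟩)
  exact prod_eq_zero hjs (hx j hjB)

lemma esymm_extend_zero {L : ℕ} {f : Fin L → Fin N} (hf : f.Injective) (w : Fin L → ℝ) :
    esymm m (Function.extend f w 0) = esymm m w := by
  have hzero : ∀ j ∉ univ.map ⟨f, hf⟩, Function.extend f w 0 j = 0 := fun j hj =>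
    Function.extend_apply' _ _ _ fun ⟨i, hi⟩ => hj (mem_map.2 ⟨i, mem_univ _, hi⟩)
  rw [esymm_eq_sum_powersetCard_of_eq_zero hzero, powersetCard_map, sum_map]
  refine sum_congr rfl fun s _ => ?_
  show ∏ j ∈ s.map ⟨f, hf⟩, _ = _
  rw [prod_map]
  exact prod_congr rfl fun i _ => hf.extend_apply w 0 i

lemma esymm_const_mul (a : ℝ) (x : Fin N → ℝ) :
    esymm m (fun i => a * x i) = a ^ m * esymm m x := by
  rw [esymm, esymm, mul_sum]
  refine sum_congr rfl fun s hs => ?_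
  rw [prod_mul_distrib, prod_const, (mem_powersetCard.1 hs).2]

lemma continuous_esymm : Continuous (esymm (N := N) m) :=
  continuous_finsetSum _ fun _ _ => continuous_finsetProd _ fun j _ => continuous_apply j

lemma natCast_mul_esymm_update_indicator {B : Finset (Fin N)} {i₀ : Fin N} (hi₀ : i₀ ∈ B)
    (t : ℝ) (hm : 1 ≤ m) (hmB : m ≤ #B) :
    m * esymm m (Function.update ((B : Set (Fin N)).indicator 1) i₀ (1 - t)) =
      (#B - 1).choose (m - 1) * (#B - m * t) := by
  obtain ⟨p, rfl⟩ : ∃ p, m = p + 1 := ⟨m - 1, by omega⟩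
  obtain ⟨n, hn⟩ : ∃ n, #B = n + 1 := ⟨#B - 1, by omega⟩
  have hzero : ∀ j ∉ B, Function.update ((B : Set (Fin N)).indicator 1) i₀ (1 - t) j = 0 :=
    fun j hj => by
      rw [Function.update_of_ne (ne_of_mem_of_not_mem hi₀ hj).symm, Set.indicator_of_notMem hj]
  have hnotMem := card_filter_notMem_powersetCard hi₀ (p + 1)
  have hmem : #{s ∈ B.powersetCard (p + 1) | i₀ ∈ s} = n.choose p := by
    have := card_filter_add_card_filter_not (s := B.powersetCard (p + 1)) (i₀ ∈ ·)
    rw [card_powersetCard, hn, Nat.choose_succ_succ, hnotMem, hn] at this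
    simpa using this
  have hpascal : (n.choose (p + 1) : ℝ) * (p + 1) = n.choose p * (n - p) := by
    rw [← Nat.cast_sub (by omega)]
    exact_mod_cast Nat.choose_succ_right_eq n p
  rw [esymm_eq_sum_powersetCard_of_eq_zero hzero,
    sum_congr rfl fun s hs => prod_update_indicator (mem_powersetCard.1 hs).1 i₀ (1 - t),
    sum_ite, sum_const, sum_const, hmem, hnotMem, hn]
  simp only [nsmul_eq_mul, Nat.add_sub_cancel, Nat.cast_add, Nat.cast_one]
  linear_combination hpascal

end esymm

section Lambda

variable {N k l : ℕ}

lemma isClosed_Lambda : IsClosed (Lambda k N) := by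
  simp only [Lambda, Set.ofPred_forall]
  exact isClosed_iInter fun p => isClosed_iInter fun _ => isClosed_iInter fun _ =>
    isClosed_le continuous_const continuous_esymm

lemma Lambda_subset_of_le (hkl : k ≤ l) : Lambda l N ⊆ Lambda k N :=
  fun _ hx p hp hpk => hx p hp (hpk.trans hkl)

lemma const_mul_mem_Lambda {a : ℝ} (ha : 0 ≤ a) {x : Fin N → ℝ} (hx : x ∈ Lambda k N) :
    (fun i => a * x i) ∈ Lambda k N := fun p hp hpk => by
  rw [esymm_const_mul]
  exact mul_nonneg (pow_nonneg ha p) (hx p hp hpk)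

lemma extend_mem_Lambda {L : ℕ} {f : Fin L → Fin N} (hf : f.Injective) {w : Fin L → ℝ}
    (hw : w ∈ Lambda k L) : Function.extend f w 0 ∈ Lambda k N := fun p hp hpk => by
  rw [esymm_extend_zero hf]
  exact hw p hp hpk

lemma update_indicator_mem_Lambda {B : Finset (Fin N)} {i₀ : Fin N} (hi₀ : i₀ ∈ B) {t : ℝ}
    (ht : 0 ≤ t) (hkB : k ≤ #B) (hkt : k * t ≤ #B) :
    Function.update ((B : Set (Fin N)).indicator 1) i₀ (1 - t) ∈ Lambda k N := by
  intro p hp hpk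
  have hpt : (p : ℝ) * t ≤ #B :=
    (mul_le_mul_of_nonneg_right (by exact_mod_cast hpk) ht).trans hkt
  have h := natCast_mul_esymm_update_indicator hi₀ t hp (hpk.trans hkB)
  refine nonneg_of_mul_nonneg_right (h ▸ ?_) (by positivity : (0 : ℝ) < p)
  exact mul_nonneg (Nat.cast_nonneg _) (sub_nonneg.2 hpt)

lemma update_indicator_notMem_Lambda {B : Finset (Fin N)} {i₀ : Fin N} (hi₀ : i₀ ∈ B) {t : ℝ}
    {m : ℕ} (hm : 1 ≤ m) (hml : m ≤ l) (hmB : m ≤ #B) (hmt : #B < m * t) :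
    Function.update ((B : Set (Fin N)).indicator 1) i₀ (1 - t) ∉ Lambda l N := by
  intro hx
  have h := natCast_mul_esymm_update_indicator hi₀ t hm hmB
  have hchoose : 0 < (#B - 1).choose (m - 1) := Nat.choose_pos (by omega)
  have hneg :
      (m : ℝ) * esymm m (Function.update ((B : Set (Fin N)).indicator 1) i₀ (1 - t)) < 0 := by
    rw [h]
    exact mul_neg_of_pos_of_neg (by exact_mod_cast hchoose) (sub_neg.2 hmt)
  exact hneg.not_ge (mul_nonneg (Nat.cast_nonneg m) (hx m hm hml))

lemma ite_mem_Lambda_of_pow_mul_mem {y w : Fin N → ℝ} {Y : ℝ} (hy : ∀ i, 0 ≤ y i)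
    (hyY : ∀ i, y i ≤ Y) (hY : 0 < Y) (h : ∀ n, (fun i => y i ^ (n + 1) * w i) ∈ Lambda l N) :
    (fun i => if y i = Y then w i else 0) ∈ Lambda l N := by
  have hscaled : ∀ n, (fun i => (Y ^ (n + 1))⁻¹ * (y i ^ (n + 1) * w i)) ∈ Lambda l N :=
    fun n => const_mul_mem_Lambda (by positivity) (h n)
  refine isClosed_Lambda.mem_of_tendsto (tendsto_pi_nhds.2 fun i => ?_)
    (Eventually.of_forall (f := atTop) hscaled)
  have hratio :
      Tendsto (fun n : ℕ => (y i / Y) ^ (n + 1)) atTop (𝓝 (if y i = Y then 1 else 0)) := by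
    split_ifs with hi
    · simp [hi, hY.ne']
    · exact (tendsto_pow_atTop_nhds_zero_of_lt_one (div_nonneg (hy i) hY.le)
        ((div_lt_one hY).2 ((hyY i).lt_of_ne hi))).comp (tendsto_add_atTop_nat 1)
  convert hratio.mul_const (w i) using 1
  · ext n
    rw [div_pow, div_eq_inv_mul, mul_assoc]
  · split_ifs <;> simp

end Lambda

lemma pow_mul_mem_Lambda_of_mul_mem {K L k l : ℕ} (hkl : k ≤ l) (h : L ≤ K) {y : Fin L → ℝ}
    (hprod : ∀ x ∈ Lambda k K, (fun i => y i * x (Fin.castLE h i)) ∈ Lambda l L) (n : ℕ)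
    {x : Fin K → ℝ} (hx : x ∈ Lambda k K) :
    (fun i => y i ^ (n + 1) * x (Fin.castLE h i)) ∈ Lambda l L := by
  induction n with
  | zero => simpa using hprod x hx
  | succ n ih =>
    convert hprod _ (extend_mem_Lambda (Fin.castLE_injective h) (Lambda_subset_of_le hkl ih))
      using 2 with i
    rw [(Fin.castLE_injective h).extend_apply, pow_succ]
    ring

lemma exists_lt_min_mul_and_mul_lt {K L k l s : ℕ} (hk : 1 ≤ k) (hkl : k ≤ l) (hlL : l ≤ L)
    (hs : 1 ≤ s) (hsL : s ≤ L) (hLK : L < K) :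
    ∃ t : ℝ, 0 ≤ t ∧ (s : ℝ) < (min l s : ℕ) * t ∧ k * t < K := by
  have hm : 0 < ((min l s : ℕ) : ℝ) := by have := le_min (hk.trans hkl) hs; positivity
  have hk' : (0 : ℝ) < k := by positivity
  have hlt : (s : ℝ) / (min l s : ℕ) < K / k := by
    rw [div_lt_div_iff₀ hm hk']
    suffices s * k < K * min l s by exact_mod_cast this
    rcases le_total l s with h | h
    · rw [min_eq_left h]; nlinarith
    · rw [min_eq_right h]; nlinarith [hkl.trans_lt (hlL.trans_lt hLK)]
  obtain ⟨t, hst, htK⟩ := exists_between hlt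
  exact ⟨t, (div_nonneg s.cast_nonneg hm.le).trans hst.le, (div_lt_iff₀' hm).1 hst,
    (lt_div_iff₀' hk').1 htK⟩

/-- Lemma 3.7(1): if `1 ≤ k ≤ l ≤ L < K`, `y ∈ ℝ^L` has nonnegative coordinates, and the
Hadamard product of `y` with the truncation to the first `L` coordinates of any
`x ∈ Λ_{k,K}` lies in `Λ_{l,L}`, then `y = 0`. -/
theorem lemma37_part1 (K L k l : ℕ) (hk : 1 ≤ k) (hkl : k ≤ l) (hlL : l ≤ L)
    (hLK : L < K) (y : Fin L → ℝ) (hy : ∀ i, 0 ≤ y i)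
    (hprod : ∀ x ∈ Lambda k K,
      (fun i : Fin L => y i * x (Fin.castLE hLK.le i)) ∈ Lambda l L) :
    ∀ i, y i = 0 := by
  have : Nonempty (Fin L) := ⟨⟨0, by omega⟩⟩
  obtain ⟨i₀, hi₀⟩ := Finite.exists_max y
  suffices hY : y i₀ = 0 from fun i => le_antisymm (hY ▸ hi₀ i) (hy i)
  by_contra hY
  set S : Finset (Fin L) := {i | y i = y i₀}
  have hi₀S : i₀ ∈ S := by simp [S]
  have hS : 1 ≤ #S := card_pos.2 ⟨i₀, hi₀S⟩
  obtain ⟨t, ht, hSt, htK⟩ := exists_lt_min_mul_and_mul_lt hk hkl hlL hS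
    ((card_le_univ S).trans_eq (Fintype.card_fin L)) hLK
  have hX : Function.update (1 : Fin K → ℝ) (Fin.castLE hLK.le i₀) (1 - t) ∈ Lambda k K := by
    simpa using update_indicator_mem_Lambda (mem_univ (Fin.castLE hLK.le i₀)) ht
      (by simpa using (hkl.trans hlL).trans hLK.le) (by simpa using htK.le)
  have hlim := ite_mem_Lambda_of_pow_mul_mem hy hi₀ ((hy i₀).lt_of_ne' hY)
    fun n => pow_mul_mem_Lambda_of_mul_mem hkl hLK.le hprod n hX
  refine update_indicator_notMem_Lambda hi₀S (le_min (hk.trans hkl) hS) (min_le_left _ _)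
    (min_le_right _ _) hSt ?_
  convert hlim using 2 with i
  by_cases hi : i = i₀
  · simp [hi]
  · simp [hi, S, Set.indicator_apply, (Fin.castLE_injective _).ne hi]
end

section
/- Let K, L, k be integers with 1 ≤ k < K ≤ L, and let y = (y_1,…,y_K) ∈ ℝ^K have all coordinates nonnegative. If for every x = (x_1,…,x_K) ∈ Λ_{k,K} the vector (y_1x_1,…,y_Kx_K,0,…,0) ∈ ℝ^L, obtained by the coordinatewise product followed by padding with L−K zeros, belongs to Λ_{k,L}, then y_1 = ⋯ = y_K. (Lemma 3.7(2), case k = l.) -/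
open Finset

def esymmOn {ι R : Type*} [CommSemiring R] (y : ι → R) (A : Finset ι) (l : ℕ) : R :=
  ∑ s ∈ A.powersetCard l, ∏ i ∈ s, y i

section CommSemiring

variable {ι R : Type*} [CommSemiring R]

@[simp]
lemma esymmOn_zero (y : ι → R) (A : Finset ι) : esymmOn y A 0 = 1 := by
  simp [esymmOn]

lemma esymmOn_one (A : Finset ι) (l : ℕ) : esymmOn (1 : ι → R) A l = (#A).choose l := by
  simp [esymmOn]

lemma esymmOn_congr {y z : ι → R} {A : Finset ι} (h : ∀ i ∈ A, y i = z i) (l : ℕ) :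
    esymmOn y A l = esymmOn z A l :=
  sum_congr rfl fun _ hs => prod_congr rfl fun i hi => h i ((mem_powersetCard.1 hs).1 hi)

lemma esymmOn_eq_of_subset {y : ι → R} {A B : Finset ι} (hBA : B ⊆ A)
    (h : ∀ i ∈ A, i ∉ B → y i = 0) (l : ℕ) : esymmOn y A l = esymmOn y B l := by
  refine (sum_subset (powersetCard_mono hBA) fun s hs hsB => ?_).symm
  obtain ⟨hsA, hcard⟩ := mem_powersetCard.1 hs
  obtain ⟨i, hi, hiB⟩ := not_subset.1 fun hsB' => hsB (mem_powersetCard.2 ⟨hsB', hcard⟩)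
  exact prod_eq_zero hi (h i (hsA hi) hiB)

lemma esymmOn_map {κ : Type*} (e : ι ↪ κ) (y : κ → R) (A : Finset ι) (l : ℕ) :
    esymmOn y (A.map e) l = esymmOn (y ∘ e) A l := by
  simp [esymmOn, powersetCard_map, sum_map, prod_map]

variable [DecidableEq ι]

lemma esymmOn_insert {a : ι} {A : Finset ι} (ha : a ∉ A) (y : ι → R) (l : ℕ) :
    esymmOn y (insert a A) (l + 1) = esymmOn y A (l + 1) + y a * esymmOn y A l := by
  have hnot : ∀ s ∈ A.powersetCard l, a ∉ s := fun s hs h => ha ((mem_powersetCard.1 hs).1 h)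
  rw [esymmOn, powersetCard_succ_insert ha, sum_union, sum_image, esymmOn, esymmOn, mul_sum]
  · exact congrArg _ (sum_congr rfl fun s hs => prod_insert (hnot s hs))
  · intro s hs t ht hst
    rw [← erase_insert (hnot s hs), ← erase_insert (hnot t ht), hst]
  · refine disjoint_left.2 fun s hs hs' => ?_
    obtain ⟨t, -, rfl⟩ := mem_image.1 hs'
    exact ha ((mem_powersetCard.1 hs).1 (mem_insert_self a t))

lemma esymmOn_succ_of_mem (y : ι → R) {A : Finset ι} {i : ι} (hi : i ∈ A) (l : ℕ) :
    esymmOn y A (l + 1) = esymmOn y (A.erase i) (l + 1) + y i * esymmOn y (A.erase i) l := by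
  conv_lhs => rw [← insert_erase hi]
  exact esymmOn_insert (notMem_erase i A) y l

lemma esymmOn_update_succ (y : ι → R) {A : Finset ι} {j : ι} (hj : j ∈ A) (c : R) (l : ℕ) :
    esymmOn (Function.update y j c) A (l + 1)
      = esymmOn y (A.erase j) (l + 1) + c * esymmOn y (A.erase j) l := by
  have h := esymmOn_congr (A := A.erase j) fun i hi =>
    Function.update_of_ne (ne_of_mem_erase hi) c y
  rw [esymmOn_succ_of_mem _ hj, Function.update_self, h, h]

lemma sum_esymmOn_erase_add [Fintype ι] (y : ι → R) (l : ℕ) :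
    ∑ j, esymmOn y (univ.erase j) l + l * esymmOn y univ l
      = Fintype.card ι * esymmOn y univ l := by
  have hcompl : ∀ j, esymmOn y (univ.erase j) l
      = ∑ s ∈ powersetCard l univ, if j ∈ sᶜ then ∏ i ∈ s, y i else 0 := fun j => by
    rw [← sum_filter, esymmOn]
    congr 1
    ext s
    simp [subset_erase, and_comm]
  simp_rw [hcompl]
  rw [sum_comm, esymmOn, mul_sum, mul_sum, ← sum_add_distrib]
  refine sum_congr rfl fun s hs => ?_
  rw [sum_ite_mem, univ_inter, sum_const, nsmul_eq_mul, ← (mem_powersetCard.1 hs).2, ← add_mul,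
    ← Nat.cast_add, card_compl_add_card]

end CommSemiring

section CommRing

variable {ι R : Type*} [CommRing R] [DecidableEq ι]

lemma sum_mul_esymmOn_erase [Fintype ι] (y : ι → R) (l : ℕ) :
    ∑ j, y j * esymmOn y (univ.erase j) l = (l + 1) * esymmOn y univ (l + 1) := by
  have hsplit : ∀ j, y j * esymmOn y (univ.erase j) l
      = esymmOn y univ (l + 1) - esymmOn y (univ.erase j) (l + 1) := fun j => by
    rw [esymmOn_succ_of_mem y (mem_univ j)]
    ring
  rw [sum_congr rfl fun j _ => hsplit j, sum_sub_distrib, sum_const, card_univ, nsmul_eq_mul]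
  have hcount := sum_esymmOn_erase_add y (l + 1)
  push_cast at hcount
  linear_combination -hcount

lemma sub_mul_esymmOn_erase_erase_eq_zero (y : ι → R) {A : Finset ι} {i j : ι} (hi : i ∈ A)
    (hj : j ∈ A) (hij : i ≠ j) {l : ℕ}
    (h : y i * esymmOn y (A.erase i) l = y j * esymmOn y (A.erase j) l) :
    (y i - y j) * esymmOn y ((A.erase i).erase j) l = 0 := by
  cases l with
  | zero => simpa [sub_eq_zero] using h
  | succ l =>
    rw [esymmOn_succ_of_mem y (mem_erase.2 ⟨hij.symm, hj⟩),
      esymmOn_succ_of_mem y (mem_erase.2 ⟨hij, hi⟩), erase_right_comm (a := j)] at h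
    linear_combination h

end CommRing

lemma esymmOn_succ_eq_zero {ι R : Type*} [CommSemiring R] [PartialOrder R] [IsOrderedRing R]
    [DecidableEq ι] {y : ι → R} (hy : ∀ i, 0 ≤ y i) {A : Finset ι} {l : ℕ}
    (h : esymmOn y A l = 0) : esymmOn y A (l + 1) = 0 := by
  have hzero := (sum_eq_zero_iff_of_nonneg fun s _ => prod_nonneg fun i _ => hy i).1 h
  refine sum_eq_zero fun s hs => ?_
  obtain ⟨hsA, hcard⟩ := mem_powersetCard.1 hs
  obtain ⟨a, ha⟩ : s.Nonempty := card_pos.1 (by omega)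
  have hsa : s.erase a ∈ A.powersetCard l :=
    mem_powersetCard.2 ⟨(erase_subset a s).trans hsA, by rw [card_erase_of_mem ha, hcard]; rfl⟩
  rw [← mul_prod_erase s y ha, hzero _ hsa, mul_zero]

lemma Nat.sub_mul_choose_le_mul_choose_succ {K k m : ℕ} (h : m + 1 ≤ k) :
    (K - k) * (K - 1).choose m ≤ k * (K - 1).choose (m + 1) :=
  calc (K - k) * (K - 1).choose m
      ≤ (K - 1 - m) * (K - 1).choose m := Nat.mul_le_mul_right _ (by omega)
    _ = (K - 1).choose (m + 1) * (m + 1) := by rw [mul_comm, Nat.choose_succ_right_eq]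
    _ ≤ k * (K - 1).choose (m + 1) := by rw [mul_comm]; exact Nat.mul_le_mul_right _ h

lemma esymm_pad {K L : ℕ} (hKL : K ≤ L) (u : Fin K → ℝ) (l : ℕ) :
    esymm l (fun i : Fin L => if h : (i : ℕ) < K then u ⟨i, h⟩ else 0) = esymm l u := by
  change esymmOn _ univ l = esymmOn u univ l
  rw [esymmOn_eq_of_subset (subset_univ (univ.map (Fin.castLEEmb hKL))), esymmOn_map]
  · congr 1
    ext i
    simp
  · intro i _ hi
    have : ¬ (i : ℕ) < K := fun h => hi (mem_map.2 ⟨⟨i, h⟩, mem_univ _, Fin.ext rfl⟩)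
    simp [this]

lemma update_one_mem_Lambda {k K : ℕ} (hkK : k ≤ K) (j : Fin K) :
    Function.update (1 : Fin K → ℝ) j (-((K - k) / k)) ∈ Lambda k K := by
  intro l hl hlk
  obtain ⟨m, rfl⟩ : ∃ m, l = m + 1 := ⟨l - 1, by omega⟩
  have hk : (0 : ℝ) < k := by exact_mod_cast (by omega : 0 < k)
  have hchoose : ((K : ℝ) - k) / k * (K - 1).choose m ≤ (K - 1).choose (m + 1) := by
    rw [div_mul_eq_mul_div, div_le_iff₀ hk, ← Nat.cast_sub hkK, mul_comm _ (k : ℝ)]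
    exact_mod_cast Nat.sub_mul_choose_le_mul_choose_succ hlk
  change 0 ≤ esymmOn _ univ (m + 1)
  rw [esymmOn_update_succ _ (mem_univ j), esymmOn_one, esymmOn_one, card_erase_of_mem (mem_univ j),
    card_univ, Fintype.card_fin]
  linarith

/-- With `N = |ι|`, this is `k σ_{m+1}(y x) ≥ 0` for the vector `x ∈ Λ_{k,N}` whose coordinates
are all `1` except `x_j = -(N - k) / k`. -/
def DeletionBound {ι : Type*} [Fintype ι] [DecidableEq ι] (k : ℕ) (y : ι → ℝ) : Prop :=
  ∀ j m, m + 1 ≤ k → ((Fintype.card ι : ℝ) - k) * (y j * esymmOn y (univ.erase j) m)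
    ≤ k * esymmOn y (univ.erase j) (m + 1)

lemma deletionBound_of_forall_mul_mem_Lambda {k K : ℕ} (hkK : k ≤ K) {y : Fin K → ℝ}
    (hmul : ∀ x ∈ Lambda k K, y * x ∈ Lambda k K) : DeletionBound k y := by
  intro j m hm
  have hk : (0 : ℝ) < k := by exact_mod_cast (by omega : 0 < k)
  set c : ℝ := (K - k) / k
  have hyx : y * Function.update (1 : Fin K → ℝ) j (-c) = Function.update y j (y j * -c) := by
    ext i
    rcases eq_or_ne i j with rfl | hij
    · simp
    · simp [hij]
  have h := hmul _ (update_one_mem_Lambda hkK j) (m + 1) (by omega) hm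
  change 0 ≤ esymmOn _ univ (m + 1) at h
  rw [hyx, esymmOn_update_succ _ (mem_univ j)] at h
  have hkc : (k : ℝ) * c = K - k := mul_div_cancel₀ _ hk.ne'
  rw [Fintype.card_fin, ← hkc]
  nlinarith [mul_nonneg hk.le h]

namespace DeletionBound

variable {ι : Type*} [Fintype ι] [DecidableEq ι] {k n : ℕ} {y : ι → ℝ}

lemma esymmOn_erase_pos (hb : DeletionBound k y) (hkN : k < Fintype.card ι) {j : ι}
    (hj : 0 < y j) {m : ℕ} (hm : m ≤ k) : 0 < esymmOn y (univ.erase j) m := by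
  induction m with
  | zero => simp
  | succ m ih =>
    have hk : (0 : ℝ) < k := by exact_mod_cast (by omega : 0 < k)
    have hNk : (0 : ℝ) < Fintype.card ι - k := sub_pos.2 (by exact_mod_cast hkN)
    have := mul_pos hNk (mul_pos hj (ih (by omega)))
    exact pos_of_mul_pos_right (this.trans_le (hb j m hm)) hk.le

lemma card_mul_mul_esymmOn_erase (hb : DeletionBound (n + 1) y) (j : ι) :
    (Fintype.card ι : ℝ) * (y j * esymmOn y (univ.erase j) n)
      = (n + 1) * esymmOn y univ (n + 1) := by
  have hsplit : ∀ j, esymmOn y univ (n + 1)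
      = esymmOn y (univ.erase j) (n + 1) + y j * esymmOn y (univ.erase j) n :=
    fun j => esymmOn_succ_of_mem y (mem_univ j) n
  have hnonneg : ∀ j ∈ univ,
      0 ≤ (n + 1) * esymmOn y univ (n + 1) - Fintype.card ι * (y j * esymmOn y (univ.erase j) n) :=
    fun j _ => by
      have := hb j n le_rfl
      push_cast at this
      rw [hsplit j]
      linarith
  have hsum : ∑ j, ((n + 1) * esymmOn y univ (n + 1)
      - Fintype.card ι * (y j * esymmOn y (univ.erase j) n)) = 0 := by
    rw [sum_sub_distrib, ← mul_sum (s := univ) (a := (Fintype.card ι : ℝ)), sum_mul_esymmOn_erase,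
      sum_const, card_univ, nsmul_eq_mul]
    ring
  linarith [(sum_eq_zero_iff_of_nonneg hnonneg).1 hsum j (mem_univ j)]

theorem eq (hy : ∀ i, 0 ≤ y i) (hb : DeletionBound (n + 1) y) (hN : n + 1 < Fintype.card ι)
    (i j : ι) : y i = y j := by
  suffices key : ∀ i j, 0 < y j → y i = y j by
    rcases (hy j).lt_or_eq with hj | hj
    · exact key i j hj
    rcases (hy i).lt_or_eq with hi | hi
    · exact (key j i hi).symm
    · rw [← hi, ← hj]
  intro i j hj
  rcases eq_or_ne i j with rfl | hij
  · rfl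
  by_contra hne
  have hN0 : (Fintype.card ι : ℝ) ≠ 0 := by exact_mod_cast (by omega : Fintype.card ι ≠ 0)
  have heq : y i * esymmOn y (univ.erase i) n = y j * esymmOn y (univ.erase j) n :=
    mul_left_cancel₀ hN0
      ((hb.card_mul_mul_esymmOn_erase i).trans (hb.card_mul_mul_esymmOn_erase j).symm)
  have hzero : esymmOn y ((univ.erase i).erase j) n = 0 :=
    (mul_eq_zero.1 (sub_mul_esymmOn_erase_erase_eq_zero y (mem_univ i) (mem_univ j) hij heq)
      ).resolve_left (sub_ne_zero.2 hne)
  have hpos := hb.esymmOn_erase_pos hN hj le_rfl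
  rw [esymmOn_succ_of_mem y (mem_erase.2 ⟨hij, mem_univ i⟩), erase_right_comm, hzero,
    esymmOn_succ_eq_zero hy hzero] at hpos
  simp at hpos

end DeletionBound

theorem eq_of_forall_mul_mem_Lambda {k K : ℕ} (hk : 1 ≤ k) (hkK : k < K) {y : Fin K → ℝ}
    (hy : ∀ i, 0 ≤ y i) (hmul : ∀ x ∈ Lambda k K, y * x ∈ Lambda k K) (i j : Fin K) :
    y i = y j := by
  obtain ⟨n, rfl⟩ : ∃ n, k = n + 1 := ⟨k - 1, by omega⟩
  exact (deletionBound_of_forall_mul_mem_Lambda hkK.le hmul).eq hy (by simpa using hkK) i j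

/-- Lemma 3.7(2), case `k = l`: if `1 ≤ k < K ≤ L`, `y ∈ ℝ^K` has nonnegative
coordinates, and the zero-padded coordinatewise product of `y` with any `x ∈ Λ_{k,K}`
lies in `Λ_{k,L}`, then all coordinates of `y` are equal. -/
theorem lemma37_part2_eq (K L k : ℕ) (hk : 1 ≤ k) (hkK : k < K) (hKL : K ≤ L)
    (y : Fin K → ℝ) (hy : ∀ i, 0 ≤ y i)
    (hprod : ∀ x ∈ Lambda k K,
      (fun i : Fin L => if h : (i : ℕ) < K then y ⟨i, h⟩ * x ⟨i, h⟩ else 0)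
        ∈ Lambda k L) :
    ∀ i j, y i = y j :=
  eq_of_forall_mul_mem_Lambda hk hkK hy fun x hx l hl hlk =>
    (hprod x hx l hl hlk).trans_eq (esymm_pad hKL (y * x) l)
end

section
/- Let K, L, k, l be integers with 1 ≤ k < K ≤ L, k < l ≤ L, and let y = (y_1,…,y_K) ∈ ℝ^K have all coordinates nonnegative. If for every x = (x_1,…,x_K) ∈ Λ_{k,K} the vector (y_1x_1,…,y_Kx_K,0,…,0) ∈ ℝ^L, obtained by the coordinatewise product followed by padding with L−K zeros, belongs to Λ_{l,L}, then y_1 = ⋯ = y_K = 0. (Lemma 3.7(2), case k < l.) -/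
/-!
If `y i₀ > 0`, let `x` be `1` on a set `P` of `k` indices other than `i₀`, `-1/(k+1)` at `i₀` and
`0` elsewhere. Then `σ_m(x) = C(k,m) - C(k,m-1)/(k+1) ≥ 0` for `m ≤ k`, so `x ∈ Λ_{k,K}`. The
product `w = y·x` has a single negative entry (at `i₀`) and at most `k + 1 ≤ l` nonzero entries;
if it has `s` of them, `σ_s(w)` is their product, hence negative. Zero padding does not change
`σ_s`, contradicting the hypothesis.
-/

open Finset Function

lemma sum_powersetCard_succ_insert_prod {ι R : Type*} [DecidableEq ι] [CommSemiring R]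
    {U : Finset ι} {a : ι} (ha : a ∉ U) (f : ι → R) (n : ℕ) :
    ∑ A ∈ powersetCard (n + 1) (insert a U), ∏ j ∈ A, f j =
      ∑ A ∈ powersetCard (n + 1) U, ∏ j ∈ A, f j + f a * ∑ A ∈ powersetCard n U, ∏ j ∈ A, f j := by
  have hnot : ∀ B ∈ powersetCard n U, a ∉ B := fun B hB h => ha ((mem_powersetCard.1 hB).1 h)
  rw [powersetCard_succ_insert ha, sum_union, sum_image, mul_sum]
  · exact congrArg _ (sum_congr rfl fun B hB => prod_insert (hnot B hB))
  · intro B hB B' hB' h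
    simpa [erase_insert (hnot B hB), erase_insert (hnot B' hB')] using congrArg (erase · a) h
  · refine disjoint_right.2 fun A hA hA' => ?_
    obtain ⟨B, -, rfl⟩ := mem_image.1 hA
    exact ha ((mem_powersetCard.1 hA').1 (mem_insert_self a B))

lemma Nat.choose_le_mul_choose_succ {k n : ℕ} (hn : n < k) :
    k.choose n ≤ k * k.choose (n + 1) :=
  calc k.choose n ≤ k.choose n * (k - n) := Nat.le_mul_of_pos_right _ (by omega)
    _ = k.choose (n + 1) * (n + 1) := (Nat.choose_succ_right_eq _ _).symm
    _ ≤ k * k.choose (n + 1) := by rw [mul_comm]; exact Nat.mul_le_mul_right _ hn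

section Esymm

variable {N : ℕ}

lemma esymm_eq_sum_powersetCard_of_support_subset {z : Fin N → ℝ} {U : Finset (Fin N)}
    (hz : ∀ j ∉ U, z j = 0) (m : ℕ) :
    esymm m z = ∑ A ∈ powersetCard m U, ∏ j ∈ A, z j := by
  refine (sum_subset (powersetCard_mono (subset_univ U)) fun A hA hAU => ?_).symm
  have : ¬ A ⊆ U := fun h => hAU (mem_powersetCard.2 ⟨h, (mem_powersetCard.1 hA).2⟩)
  obtain ⟨j, hjA, hjU⟩ := not_subset.1 this
  exact prod_eq_zero hjA (hz j hjU)

lemma esymm_card_support (z : Fin N → ℝ) :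
    esymm #{j | z j ≠ 0} z = ∏ j with z j ≠ 0, z j := by
  rw [esymm_eq_sum_powersetCard_of_support_subset (U := {j | z j ≠ 0}) (by simp),
    powersetCard_self, sum_singleton]

lemma esymm_card_support_neg {z : Fin N → ℝ} {j₀ : Fin N} (hj₀ : z j₀ < 0)
    (hz : ∀ j ≠ j₀, 0 ≤ z j) : esymm #{j | z j ≠ 0} z < 0 := by
  have hmem : j₀ ∈ ({j | z j ≠ 0} : Finset (Fin N)) := by simp [hj₀.ne]
  rw [esymm_card_support, ← mul_prod_erase _ _ hmem]
  refine mul_neg_of_neg_of_pos hj₀ (prod_pos fun j hj => ?_)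
  obtain ⟨hne, hj⟩ := mem_erase.1 hj
  exact (hz j hne).lt_of_ne (mem_filter.1 hj).2.symm

lemma esymm_zeroPad {K : ℕ} (hKN : K ≤ N) (w : Fin K → ℝ) (m : ℕ) :
    esymm m (fun i : Fin N => if h : (i : ℕ) < K then w ⟨i, h⟩ else 0) = esymm m w := by
  rw [esymm_eq_sum_powersetCard_of_support_subset (U := univ.map (Fin.castLEEmb hKN)),
    powersetCard_map, sum_map]
  · refine sum_congr rfl fun A _ => ?_
    simp [prod_map]
  · intro i hi
    have : ¬ (i : ℕ) < K := fun h => hi (mem_map.2 ⟨⟨i, h⟩, mem_univ _, rfl⟩)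
    simp [this]

lemma esymm_update_indicator_succ {P : Finset (Fin N)} {j₀ : Fin N} (hj₀ : j₀ ∉ P)
    (a : ℝ) (n : ℕ) :
    esymm (n + 1) (update (Set.indicator ↑P 1) j₀ a) =
      (#P).choose (n + 1) + a * (#P).choose n := by
  set x := update (Set.indicator ↑P 1) j₀ a
  have hsupp : ∀ j ∉ insert j₀ P, x j = 0 := fun j hj => by
    rw [mem_insert, not_or] at hj
    simp [x, update_of_ne hj.1, hj.2]
  have hones : ∀ n, ∑ A ∈ powersetCard n P, ∏ j ∈ A, x j = (#P).choose n := fun n => by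
    rw [sum_congr rfl fun A hA => prod_eq_one fun j hj => ?_]
    · simp
    have hjP := (mem_powersetCard.1 hA).1 hj
    simp [x, update_of_ne (ne_of_mem_of_not_mem hjP hj₀), hjP]
  rw [esymm_eq_sum_powersetCard_of_support_subset hsupp, sum_powersetCard_succ_insert_prod hj₀,
    hones, hones]
  simp [x]

lemma update_indicator_mem_Lambda_s17 {P : Finset (Fin N)} {j₀ : Fin N} (hj₀ : j₀ ∉ P) :
    update (Set.indicator ↑P 1) j₀ (-((#P : ℝ) + 1)⁻¹) ∈ Lambda (#P) N := by
  rintro _ hm hmk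
  obtain ⟨n, rfl⟩ := Nat.exists_eq_add_of_le' hm
  rw [esymm_update_indicator_succ hj₀]
  have key : ((#P).choose n : ℝ) ≤ (#P + 1) * (#P).choose (n + 1) := by
    exact_mod_cast (Nat.choose_le_mul_choose_succ (by omega)).trans (Nat.mul_le_mul_right _ (Nat.le_succ _))
  have : ((#P : ℝ) + 1)⁻¹ * (#P).choose n ≤ (#P).choose (n + 1) := by
    rw [inv_mul_le_iff₀ (by positivity)]; exact key
  linarith

end Esymm

theorem lemma37_part2_lt_general (K L k l : ℕ) (hkK : k < K) (hKL : K ≤ L)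
    (hkl : k < l)
    (y : Fin K → ℝ) (hy : ∀ i, 0 ≤ y i)
    (hprod : ∀ x ∈ Lambda k K,
      (fun i : Fin L => if h : (i : ℕ) < K then y ⟨i, h⟩ * x ⟨i, h⟩ else 0)
        ∈ Lambda l L) :
    ∀ i, y i = 0 := by
  intro i₀
  by_contra hi₀
  obtain ⟨P, hPi₀, rfl⟩ := exists_subset_card_eq (s := univ.erase i₀) (n := k) (by simp; omega)
  have hi₀P : i₀ ∉ P := fun h => by simpa using hPi₀ h
  set x := update (Set.indicator ↑P 1) i₀ (-((#P : ℝ) + 1)⁻¹)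
  set w : Fin K → ℝ := fun j => y j * x j
  have hw₀ : w i₀ < 0 := by
    simp only [w, x, update_self]
    exact mul_neg_of_pos_of_neg ((hy i₀).lt_of_ne' hi₀) (neg_neg_of_pos (by positivity))
  have hw : ∀ j ≠ i₀, 0 ≤ w j := fun j hj => by
    simp only [w, x, update_of_ne hj]
    exact mul_nonneg (hy j) (Set.indicator_nonneg (fun _ _ => zero_le_one) _)
  have hcard : #{j | w j ≠ 0} ≤ #P + 1 := by
    refine (card_le_card fun j hj => ?_).trans (card_insert_le i₀ P)
    by_contra hjP
    rw [mem_insert, not_or] at hjP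
    simp [w, x, update_of_ne hjP.1, hjP.2] at hj
  have hpos : 1 ≤ #{j | w j ≠ 0} := card_pos.2 ⟨i₀, by simp [hw₀.ne]⟩
  exact (esymm_card_support_neg hw₀ hw).not_ge <|
    (hprod x (update_indicator_mem_Lambda_s17 hi₀P) _ hpos (by omega)).trans_eq (esymm_zeroPad hKL w _)

/-- Lemma 3.7(2), case `k < l`: if `1 ≤ k < K ≤ L`, `k < l ≤ L`, `y ∈ ℝ^K` has
nonnegative coordinates, and the zero-padded coordinatewise product of `y` with any
`x ∈ Λ_{k,K}` lies in `Λ_{l,L}`, then `y = 0`. -/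
theorem lemma37_part2_lt (K L k l : ℕ) (hk : 1 ≤ k) (hkK : k < K) (hKL : K ≤ L)
    (hkl : k < l) (hlL : l ≤ L)
    (y : Fin K → ℝ) (hy : ∀ i, 0 ≤ y i)
    (hprod : ∀ x ∈ Lambda k K,
      (fun i : Fin L => if h : (i : ℕ) < K then y ⟨i, h⟩ * x ⟨i, h⟩ else 0)
        ∈ Lambda l L) :
    ∀ i, y i = 0 :=
  lemma37_part2_lt_general K L k l hkK hKL hkl y hy hprod
end

section
/- Consider the set Ω = {(x_1,x_2,x_3) ∈ ℝ³ : x_1 + x_2 + x_3 ≥ 0 and x_1x_2 + x_2x_3 + x_3x_1 ≥ 0}. Then x_1 + 4x_2 + 9x_3 ≥ 0 for every (x_1,x_2,x_3) ∈ Ω, whereas the linear function x_1 + x_2 + 9x_3 attains both strictly positive and strictly negative values on Ω; in particular there exists (x_1,x_2,x_3) ∈ Ω with x_1 + x_2 + 9x_3 < 0. (Example 3.8.) -/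
/-!
`Ω` is the closed Gårding cone of `σ₂`, a circular cone around `(1, 1, 1)`, and its dual cone is
`{a : 0 ≤ σ₁(a), σ₁(a)² ≤ 4 σ₂(a)}`: the identity `pairing_mul_eq_sum_sq` writes
`⟪a, x⟫ (2 σ₁(a) σ₁(x) - 3 ⟪a, x⟫)` as a sum of nonnegative terms for such `a` and `x ∈ Ω`, which
forces `⟪a, x⟫ ≥ 0`. The vector `(1, 4, 9)` lies on the boundary of the dual cone
(`σ₁ = 14`, `σ₂ = 49`), whereas `(1, 1, 9)` does not (`σ₁ = 11`, `σ₂ = 19`), so `x₁ + x₂ + 9 x₃`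
changes sign on `Ω`, e.g. at `(1, 1, 1)` and `(3, 3, -1)`.
-/

section DualCone

variable (a1 a2 a3 x1 x2 x3 : ℝ)

theorem pairing_mul_eq_sum_sq :
    (a1 * x1 + a2 * x2 + a3 * x3) *
        (2 * (a1 + a2 + a3) * (x1 + x2 + x3) - 3 * (a1 * x1 + a2 * x2 + a3 * x3)) =
      (x1 + x2 + x3) ^ 2 * (4 * (a1 * a2 + a2 * a3 + a3 * a1) - (a1 + a2 + a3) ^ 2) +
        2 * (x1 * x2 + x2 * x3 + x3 * x1) * ((a1 - a2) ^ 2 + (a2 - a3) ^ 2 + (a3 - a1) ^ 2) +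
        (x1 * a2 - x2 * a1 + x2 * a3 - x3 * a2 + x3 * a1 - x1 * a3) ^ 2 := by
  ring

variable {a1 a2 a3 x1 x2 x3}

theorem pairing_nonneg_of_mem_dual (ha1 : 0 ≤ a1 + a2 + a3)
    (ha2 : (a1 + a2 + a3) ^ 2 ≤ 4 * (a1 * a2 + a2 * a3 + a3 * a1))
    (hx1 : 0 ≤ x1 + x2 + x3) (hx2 : 0 ≤ x1 * x2 + x2 * x3 + x3 * x1) :
    0 ≤ a1 * x1 + a2 * x2 + a3 * x3 := by
  have hprod : 0 ≤ (a1 * x1 + a2 * x2 + a3 * x3) *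
      (2 * (a1 + a2 + a3) * (x1 + x2 + x3) - 3 * (a1 * x1 + a2 * x2 + a3 * x3)) := by
    rw [pairing_mul_eq_sum_sq]
    have := sub_nonneg.2 ha2
    positivity
  by_contra! hneg
  have hsecond : 0 < 2 * (a1 + a2 + a3) * (x1 + x2 + x3) - 3 * (a1 * x1 + a2 * x2 + a3 * x3) := by
    nlinarith [mul_nonneg ha1 hx1]
  exact absurd hprod (not_le.2 (mul_neg_of_neg_of_pos hneg hsecond))

end DualCone

/-- Example 3.8: on `Ω = {x ∈ ℝ³ : σ_1(x) ≥ 0, σ_2(x) ≥ 0}` the linear function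
`x_1 + 4x_2 + 9x_3` is nonnegative, while `x_1 + x_2 + 9x_3` attains both strictly
positive and strictly negative values on `Ω`. -/
theorem example38 :
    (∀ x1 x2 x3 : ℝ,
      (0 ≤ x1 + x2 + x3 ∧ 0 ≤ x1 * x2 + x2 * x3 + x3 * x1) →
        0 ≤ x1 + 4 * x2 + 9 * x3) ∧
    (∃ x1 x2 x3 : ℝ,
      (0 ≤ x1 + x2 + x3 ∧ 0 ≤ x1 * x2 + x2 * x3 + x3 * x1) ∧
        0 < x1 + x2 + 9 * x3) ∧
    (∃ x1 x2 x3 : ℝ,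
      (0 ≤ x1 + x2 + x3 ∧ 0 ≤ x1 * x2 + x2 * x3 + x3 * x1) ∧
        x1 + x2 + 9 * x3 < 0) := by
  refine ⟨fun x1 x2 x3 ⟨hx1, hx2⟩ => ?_, ⟨1, 1, 1, by norm_num⟩, ⟨3, 3, -1, by norm_num⟩⟩
  have h := pairing_nonneg_of_mem_dual (a1 := 1) (a2 := 4) (a3 := 9) (by norm_num) (by norm_num)
    hx1 hx2
  linarith
end
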